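/- arXiv:0704.1584 — 6 statements merged into one kernel-verified Lean document; each statement's English description precedes it below -/
import Mathlib

section
/- Let Z be a random vector with values in ℝᵏ and let W be a univariate standard Gaussian random variable independent of Z. Let C ∈ ℝᵏ and τ > 0. Then the function x ↦ P(Z ≤ Cx)·P(|W − x| < τ) + P(Z ≤ CW, |W − x| ≥ τ) is constant on ℝ if and only if C = 0 or P(Z ≤ Cx) = 0 for every x ∈ ℝ. -/
/-!
Write `F x = P(Z ≤ C x)` and `γ` for the law of `W`. By independence,
`P(Z ≤ C W, |W - x| ≥ τ) = ∫_{|w - x| ≥ τ} F dγ`, so the function of the statement is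
`∫ F dγ` plus the defect `F x · γ(B(x, τ)) - ∫_{B(x, τ)} F dγ`, and it is constant iff the
defect is. The defect tends to `0` as `x → -∞`, so if it is constant it vanishes: `F` has the
mean-value property over the balls `B(x, τ)`. Since `γ` has no atoms, this makes `F`
continuous, and the energy `e x = ∫_{B(x, τ)} (F x - F t)² dγ(t)` equals
`∫_{B(x, τ)} F² dγ - F(x)² γ(B(x, τ))`, whose `γ`-integral vanishes by the symmetry of
`|x - t| < τ`. As `γ` charges every open set, `e ≡ 0`, so `F` is locally constant, hence
constant. Finally `F` is constant iff `C = 0` or `F ≡ 0`: if `C i ≠ 0`, then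
`F (y / C i) ≤ P(Z i ≤ y) → 0` as `y → -∞`.
-/

open MeasureTheory ProbabilityTheory Filter Metric Set Topology

noncomputable section

namespace PMS

section BallAverage

variable {ν : Measure ℝ} {τ : ℝ}

lemma continuous_setIntegral_ball [NullSingletonClass ν] (hτ : 0 ≤ τ) {g : ℝ → ℝ}
    (hg : Integrable g ν) : Continuous fun x => ∫ t in ball x τ, g t ∂ν := by
  have hprim := intervalIntegral.continuous_primitive (fun _ _ => hg.intervalIntegrable) 0
  have h : ∀ x, ∫ t in ball x τ, g t ∂ν =
      (∫ t in (0)..(x + τ), g t ∂ν) - ∫ t in (0)..(x - τ), g t ∂ν := by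
    intro x
    rw [intervalIntegral.integral_interval_sub_left hg.intervalIntegrable hg.intervalIntegrable,
      intervalIntegral.integral_of_le (by linarith), integral_Ioc_eq_integral_Ioo, Real.ball_eq_Ioo]
  simp_rw [h]
  exact (hprim.comp (continuous_add_const τ)).sub (hprim.comp (continuous_sub_right τ))

lemma continuous_measureReal_ball [IsFiniteMeasure ν] [NullSingletonClass ν] (hτ : 0 ≤ τ) :
    Continuous fun x => ν.real (ball x τ) := by
  simpa using continuous_setIntegral_ball (ν := ν) hτ (integrable_const (1 : ℝ))

lemma tendsto_measureReal_Iic_atBot [IsFiniteMeasure ν] :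
    Tendsto (fun x => ν.real (Iic x)) atBot (𝓝 0) := by
  have hempty : ⋂ x : ℝ, Iic x = ∅ :=
    iInter_Iic_eq_empty_iff.mpr (by rw [range_id']; exact not_bddBelow_univ)
  have h := tendsto_measure_iInter_atBot (μ := ν) (fun x => measurableSet_Iic.nullMeasurableSet)
    (fun _ _ => Iic_subset_Iic.mpr) ⟨0, measure_ne_top ν _⟩
  rw [hempty, measure_empty] at h
  simpa [Function.comp_def, measureReal_def] using
    (ENNReal.tendsto_toReal ENNReal.zero_ne_top).comp h

lemma tendsto_measureReal_ball_atBot [IsFiniteMeasure ν] :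
    Tendsto (fun x => ν.real (ball x τ)) atBot (𝓝 0) :=
  tendsto_of_tendsto_of_tendsto_of_le_of_le tendsto_const_nhds
    (tendsto_measureReal_Iic_atBot.comp (tendsto_atBot_add_const_right _ τ tendsto_id))
    (fun _ => measureReal_nonneg)
    (fun x => measureReal_mono fun t ht => by rw [Real.ball_eq_Ioo] at ht; exact ht.2.le)

lemma integral_setIntegral_ball [IsFiniteMeasure ν] {g : ℝ → ℝ} (hg : Integrable g ν) :
    ∫ x, ∫ t in ball x τ, g t ∂ν ∂ν = ∫ t, ν.real (ball t τ) * g t ∂ν := by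
  set S : Set (ℝ × ℝ) := {p | dist p.2 p.1 < τ}
  have hS : MeasurableSet S := measurableSet_lt (by fun_prop) measurable_const
  have hint : Integrable (Function.uncurry fun x t => S.indicator (fun p => g p.2) (x, t))
      (ν.prod ν) := (hg.comp_snd ν).indicator hS
  calc ∫ x, ∫ t in ball x τ, g t ∂ν ∂ν
      = ∫ x, ∫ t, S.indicator (fun p => g p.2) (x, t) ∂ν ∂ν := by
        congr 1; ext x
        rw [← integral_indicator measurableSet_ball]; rfl
    _ = ∫ t, ∫ x, S.indicator (fun p => g p.2) (x, t) ∂ν ∂ν := integral_integral_swap hint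
    _ = ∫ t, ν.real (ball t τ) * g t ∂ν := by
        congr 1; ext t
        have : (fun x => S.indicator (fun p => g p.2) (x, t)) =
            (ball t τ).indicator (fun _ => g t) := by
          ext x; simp [S, indicator, mem_ball, dist_comm]
        rw [this, integral_indicator measurableSet_ball, setIntegral_const, smul_eq_mul]

end BallAverage

section MeanValue

variable {ν : Measure ℝ} {τ : ℝ} {f : ℝ → ℝ}

lemma continuous_of_setIntegral_ball_eq_mul [IsFiniteMeasure ν] [NullSingletonClass ν]
    [ν.IsOpenPosMeasure] (hτ : 0 < τ) (hf : Integrable f ν)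
    (hmv : ∀ x, ∫ t in ball x τ, f t ∂ν = f x * ν.real (ball x τ)) : Continuous f := by
  have hpos : ∀ x, ν.real (ball x τ) ≠ 0 := fun x =>
    (ENNReal.toReal_pos (measure_ball_pos ν x hτ).ne' (measure_ne_top ν _)).ne'
  have hf_eq : f = fun x => (∫ t in ball x τ, f t ∂ν) / ν.real (ball x τ) := by
    ext x; rw [hmv, mul_div_cancel_right₀ _ (hpos x)]
  rw [hf_eq]
  exact (continuous_setIntegral_ball hτ.le hf).div (continuous_measureReal_ball hτ.le) hpos

lemma setIntegral_ball_sub_sq [IsFiniteMeasure ν] (hf : MemLp f 2 ν) {x : ℝ}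
    (hmv : ∫ t in ball x τ, f t ∂ν = f x * ν.real (ball x τ)) :
    ∫ t in ball x τ, (f x - f t) ^ 2 ∂ν =
      ∫ t in ball x τ, f t ^ 2 ∂ν - f x ^ 2 * ν.real (ball x τ) := by
  have hf1 : IntegrableOn f (ball x τ) ν := (hf.integrable one_le_two).integrableOn
  have hf2 : IntegrableOn (fun t => f t ^ 2) (ball x τ) ν := hf.integrable_sq.integrableOn
  have hexp : (fun t => (f x - f t) ^ 2) = fun t => f t ^ 2 - 2 * f x * f t + f x ^ 2 := by
    ext t; ring
  have hlin : IntegrableOn (fun t => f t ^ 2 - 2 * f x * f t) (ball x τ) ν :=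
    hf2.sub (hf1.const_mul _)
  rw [hexp, integral_add hlin (integrableOn_const (measure_ne_top _ _)),
    integral_sub hf2 (hf1.const_mul _), integral_const_mul, hmv, setIntegral_const, smul_eq_mul]
  ring

theorem eq_of_setIntegral_ball_eq_mul [IsFiniteMeasure ν] [NullSingletonClass ν]
    [ν.IsOpenPosMeasure] (hτ : 0 < τ) (hf : MemLp f 2 ν)
    (hmv : ∀ x, ∫ t in ball x τ, f t ∂ν = f x * ν.real (ball x τ)) (x y : ℝ) : f x = f y := by
  have hfc := continuous_of_setIntegral_ball_eq_mul hτ (hf.integrable one_le_two) hmv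
  set r : ℝ → ℝ := fun x => ∫ t in ball x τ, f t ^ 2 ∂ν
  set m : ℝ → ℝ := fun x => ν.real (ball x τ)
  have hrc : Continuous r := continuous_setIntegral_ball hτ.le hf.integrable_sq
  have hmc : Continuous m := continuous_measureReal_ball hτ.le
  have hr : Integrable r ν :=
    Integrable.of_bound hrc.aestronglyMeasurable (∫ t, f t ^ 2 ∂ν) (ae_of_all _ fun x => by
      rw [Real.norm_of_nonneg (setIntegral_nonneg measurableSet_ball fun t _ => sq_nonneg _)]
      exact setIntegral_le_integral hf.integrable_sq (ae_of_all _ fun t => sq_nonneg _))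
  have hfm : Integrable (fun x => f x ^ 2 * m x) ν :=
    hf.integrable_sq.mul_bdd hmc.aestronglyMeasurable (ae_of_all _ fun x => by
      rw [Real.norm_of_nonneg measureReal_nonneg]; exact measureReal_mono (subset_univ _))
  have henergy : ∀ x, ∫ t in ball x τ, (f x - f t) ^ 2 ∂ν = r x - f x ^ 2 * m x :=
    fun x => setIntegral_ball_sub_sq hf (hmv x)
  have henergy_nonneg : ∀ x, 0 ≤ r x - f x ^ 2 * m x := fun x =>
    henergy x ▸ setIntegral_nonneg measurableSet_ball fun t _ => sq_nonneg _
  have henergy_integral : ∫ x, (r x - f x ^ 2 * m x) ∂ν = 0 := by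
    rw [integral_sub hr hfm, integral_setIntegral_ball hf.integrable_sq]
    simp only [m, mul_comm, sub_self]
  have henergy_zero : (fun x => r x - f x ^ 2 * m x) = 0 := by
    refine (hrc.sub ((hfc.pow 2).mul hmc)).ae_eq_iff_eq ν continuous_const |>.mp ?_
    exact (integral_eq_zero_iff_of_nonneg henergy_nonneg (hr.sub hfm)).mp henergy_integral
  have hlocal : ∀ x, ∀ᶠ t in 𝓝 x, f t = f x := by
    intro x
    have hsq : (fun t => (f x - f t) ^ 2) =ᵐ[ν.restrict (ball x τ)] 0 := by
      refine (setIntegral_eq_zero_iff_of_nonneg_ae (ae_of_all _ fun t => sq_nonneg _) ?_).mp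
        ((henergy x).trans (congrFun henergy_zero x))
      exact ((memLp_const (f x)).sub hf).integrable_sq.integrableOn
    filter_upwards [ball_mem_nhds x hτ] with t ht
    have := Measure.eqOn_open_of_ae_eq hsq isOpen_ball (by fun_prop) continuousOn_const ht
    simpa [sub_eq_zero, eq_comm] using this
  exact (IsLocallyConstant.iff_eventually_eq f |>.mpr hlocal).apply_eq_of_preconnectedSpace x y

def ballDefect (ν : Measure ℝ) (τ : ℝ) (f : ℝ → ℝ) (x : ℝ) : ℝ :=
  f x * ν.real (ball x τ) - ∫ t in ball x τ, f t ∂ν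

lemma ballDefect_eq_zero_of_forall_ballDefect_eq [IsFiniteMeasure ν] {M : ℝ}
    (hM : ∀ x, |f x| ≤ M) (h : ∀ x y, ballDefect ν τ f x = ballDefect ν τ f y) (x : ℝ) :
    ballDefect ν τ f x = 0 := by
  have hbound : ∀ y, |ballDefect ν τ f x| ≤ 2 * M * ν.real (ball y τ) := by
    intro y
    have hint : |∫ t in ball y τ, f t ∂ν| ≤ M * ν.real (ball y τ) :=
      norm_setIntegral_le_of_norm_le_const (f := f) (s := ball y τ) (measure_lt_top ν _)
        fun t _ => hM t
    rw [h x y, ballDefect]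
    calc |f y * ν.real (ball y τ) - ∫ t in ball y τ, f t ∂ν|
        ≤ |f y * ν.real (ball y τ)| + |∫ t in ball y τ, f t ∂ν| := abs_sub _ _
      _ = |f y| * ν.real (ball y τ) + |∫ t in ball y τ, f t ∂ν| := by
          rw [abs_mul, abs_of_nonneg measureReal_nonneg]
      _ ≤ 2 * M * ν.real (ball y τ) := by
          nlinarith [hM y, measureReal_nonneg (μ := ν) (s := ball y τ)]
  have hlim : Tendsto (fun y => 2 * M * ν.real (ball y τ)) atBot (𝓝 0) := by
    simpa using tendsto_measureReal_ball_atBot.const_mul (2 * M)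
  exact abs_nonpos_iff.mp (ge_of_tendsto' hlim hbound)

lemma ballDefect_eq_zero_of_forall_eq (h : ∀ x y, f x = f y) (x : ℝ) :
    ballDefect ν τ f x = 0 := by
  rw [ballDefect, funext fun t => h t x, setIntegral_const, smul_eq_mul, mul_comm, sub_self]

end MeanValue

lemma isOpenPosMeasure_gaussianReal (m : ℝ) {v : NNReal} (hv : v ≠ 0) :
    (gaussianReal m v).IsOpenPosMeasure :=
  (gaussianReal_absolutelyContinuous' m hv).isOpenPosMeasure

section Independence

variable {Ω α β : Type*} [MeasurableSpace Ω] [MeasurableSpace α] [MeasurableSpace β]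
  {μ : Measure Ω} {X : Ω → α} {Y : Ω → β} {s : Set (α × β)}

lemma measureReal_prodMk_mem_eq_toReal (hX : Measurable X) (hs : MeasurableSet s) (y : β) :
    μ.real {ω | (X ω, y) ∈ s} = ((μ.map X) ((fun x => (x, y)) ⁻¹' s)).toReal := by
  rw [Measure.map_apply hX (measurable_prodMk_right hs)]; rfl

lemma measurable_measureReal_prodMk_mem [IsFiniteMeasure μ] (hX : Measurable X)
    (hs : MeasurableSet s) :
    Measurable fun y => μ.real {ω | (X ω, y) ∈ s} := by
  simp_rw [measureReal_prodMk_mem_eq_toReal hX hs]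
  exact (measurable_measure_prodMk_right hs).ennreal_toReal

lemma measureReal_mem_eq_integral_of_indepFun [IsFiniteMeasure μ] (hX : Measurable X)
    (hY : Measurable Y) (hXY : IndepFun X Y μ) (hs : MeasurableSet s) :
    μ.real {ω | (X ω, Y ω) ∈ s} = ∫ y, μ.real {ω | (X ω, y) ∈ s} ∂(μ.map Y) := by
  simp_rw [measureReal_prodMk_mem_eq_toReal hX hs]
  rw [integral_toReal (measurable_measure_prodMk_right hs).aemeasurable
      (ae_of_all _ fun _ => measure_lt_top _ _), ← Measure.prod_apply_symm hs,
    ← (indepFun_iff_map_prod_eq_prod_map_map hX.aemeasurable hY.aemeasurable).mp hXY,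
    Measure.map_apply (hX.prodMk hY) hs]
  rfl

end Independence

section Orthant

variable {Ω ι : Type*} [MeasurableSpace Ω] {μ : Measure Ω} {Z : Ω → ι → ℝ}
  {C : ι → ℝ}

def orthantProb (μ : Measure Ω) (Z : Ω → ι → ℝ) (C : ι → ℝ) (x : ℝ) : ℝ :=
  μ.real {ω | ∀ i, Z ω i ≤ C i * x}

lemma measurableSet_forall_le_mul [Countable ι] :
    MeasurableSet {p : (ι → ℝ) × ℝ | ∀ i, p.1 i ≤ C i * p.2} := by
  simp only [ofPred_forall]
  exact .iInter fun i => measurableSet_le (by fun_prop) (by fun_prop)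

lemma abs_orthantProb_le_one [IsProbabilityMeasure μ] (x : ℝ) : |orthantProb μ Z C x| ≤ 1 := by
  rw [orthantProb, abs_of_nonneg measureReal_nonneg]; exact measureReal_le_one

lemma measurable_orthantProb [Countable ι] [IsFiniteMeasure μ] (hZ : Measurable Z) :
    Measurable (orthantProb μ Z C) :=
  measurable_measureReal_prodMk_mem hZ measurableSet_forall_le_mul

lemma memLp_orthantProb [Countable ι] [IsProbabilityMeasure μ] (hZ : Measurable Z)
    (ν : Measure ℝ) [IsFiniteMeasure ν] (p : ENNReal) : MemLp (orthantProb μ Z C) p ν :=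
  memLp_of_bounded (a := -1) (b := 1)
    (ae_of_all _ fun x => abs_le.mp (abs_orthantProb_le_one x))
    (measurable_orthantProb hZ).aestronglyMeasurable p

lemma forall_orthantProb_eq_iff [IsFiniteMeasure μ] (hZ : Measurable Z) :
    (∀ x y, orthantProb μ Z C x = orthantProb μ Z C y) ↔
      C = 0 ∨ ∀ x, μ {ω | ∀ i, Z ω i ≤ C i * x} = 0 := by
  constructor
  · intro h
    by_contra! hne
    obtain ⟨hC, x, hx⟩ := hne
    obtain ⟨i, hi⟩ := Function.ne_iff.mp hC
    have hbound : ∀ y, orthantProb μ Z C x ≤ (μ.map (Z · i)).real (Iic y) := by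
      intro y
      rw [h x (y / C i), map_measureReal_apply (hZ.eval (a := i)) measurableSet_Iic]
      exact measureReal_mono fun ω hω => by simpa [mul_div_cancel₀ _ hi] using hω i
    exact hx ((measureReal_eq_zero_iff).mp
      (le_antisymm (ge_of_tendsto' tendsto_measureReal_Iic_atBot hbound) measureReal_nonneg))
  · rintro (rfl | h) x y
    · simp [orthantProb]
    · simp [orthantProb, measureReal_def, h]

variable [Countable ι] {W : Ω → ℝ}

lemma measureReal_forall_le_mul_and_mem [IsFiniteMeasure μ] (hZ : Measurable Z)
    (hW : Measurable W) (hindep : IndepFun Z W μ) {B : Set ℝ} (hB : MeasurableSet B) :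
    μ.real {ω | (∀ i, Z ω i ≤ C i * W ω) ∧ W ω ∈ B} =
      ∫ w in B, orthantProb μ Z C w ∂(μ.map W) := by
  have hs : MeasurableSet {p : (ι → ℝ) × ℝ | (∀ i, p.1 i ≤ C i * p.2) ∧ p.2 ∈ B} :=
    measurableSet_forall_le_mul.inter (measurable_snd hB)
  refine (measureReal_mem_eq_integral_of_indepFun hZ hW hindep hs).trans ?_
  rw [← integral_indicator hB]
  congr 1; ext w
  by_cases hw : w ∈ B <;> simp [hw, orthantProb]

lemma toReal_measure_eq_integral_add_ballDefect [IsProbabilityMeasure μ] (hZ : Measurable Z)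
    (hW : Measurable W) (hindep : IndepFun Z W μ) (τ x : ℝ) :
    (μ {ω | ∀ i, Z ω i ≤ C i * x}).toReal * (μ {ω | |W ω - x| < τ}).toReal +
        (μ {ω | (∀ i, Z ω i ≤ C i * W ω) ∧ τ ≤ |W ω - x|}).toReal =
      ∫ w, orthantProb μ Z C w ∂(μ.map W) + ballDefect (μ.map W) τ (orthantProb μ Z C) x := by
  have hball : μ {ω | |W ω - x| < τ} = μ.map W (ball x τ) := by
    rw [Measure.map_apply hW measurableSet_ball]; rfl
  have hcompl : {ω | (∀ i, Z ω i ≤ C i * W ω) ∧ τ ≤ |W ω - x|} =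
      {ω | (∀ i, Z ω i ≤ C i * W ω) ∧ W ω ∈ (ball x τ)ᶜ} := by
    ext ω; simp [Real.dist_eq]
  rw [hball, hcompl, ← measureReal_def, ← measureReal_def, ← measureReal_def,
    measureReal_forall_le_mul_and_mem hZ hW hindep measurableSet_ball.compl,
    setIntegral_compl measurableSet_ball ((memLp_orthantProb hZ _ 1).integrable le_rfl),
    ballDefect, orthantProb]
  ring

end Orthant

/-- Lemma A.1: for `Z` an `ℝ^k`-valued random vector, `W` a standard
Gaussian independent of `Z`, `C ∈ ℝ^k` and `τ > 0`, the function
`x ↦ P(Z ≤ Cx) P(|W − x| < τ) + P(Z ≤ CW, |W − x| ≥ τ)` is constant on `ℝ` if and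
only if `C = 0` or `P(Z ≤ Cx) = 0` for every `x ∈ ℝ`. -/
theorem constant_iff_degenerate
    {k : ℕ} {Ω : Type*} [MeasurableSpace Ω] (μ : Measure Ω) [IsProbabilityMeasure μ]
    (Z : Ω → Fin k → ℝ) (W : Ω → ℝ)
    (hZ : Measurable Z) (hW : Measurable W)
    (hWlaw : μ.map W = gaussianReal 0 1)
    (hindep : IndepFun Z W μ)
    (C : Fin k → ℝ) (τ : ℝ) (hτ : 0 < τ) :
    (∀ x y : ℝ,
        (μ { ω | ∀ i, Z ω i ≤ C i * x }).toReal * (μ { ω | |W ω - x| < τ }).toReal +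
            (μ { ω | (∀ i, Z ω i ≤ C i * W ω) ∧ τ ≤ |W ω - x| }).toReal =
          (μ { ω | ∀ i, Z ω i ≤ C i * y }).toReal * (μ { ω | |W ω - y| < τ }).toReal +
            (μ { ω | (∀ i, Z ω i ≤ C i * W ω) ∧ τ ≤ |W ω - y| }).toReal) ↔
      (C = 0 ∨ ∀ x : ℝ, μ { ω | ∀ i, Z ω i ≤ C i * x } = 0) := by
  have := nullSingletonClass_gaussianReal (μ := 0) one_ne_zero
  have := isOpenPosMeasure_gaussianReal 0 one_ne_zero
  simp only [toReal_measure_eq_integral_add_ballDefect hZ hW hindep, hWlaw, add_right_inj]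
  rw [← forall_orthantProb_eq_iff hZ]
  constructor
  · intro hdefect
    refine eq_of_setIntegral_ball_eq_mul hτ (memLp_orthantProb hZ (gaussianReal 0 1) 2)
      fun x => ?_
    exact (sub_eq_zero.mp
      (ballDefect_eq_zero_of_forall_ballDefect_eq abs_orthantProb_le_one hdefect x)).symm
  · intro hconst x y
    rw [ballDefect_eq_zero_of_forall_eq hconst, ballDefect_eq_zero_of_forall_eq hconst]

end PMS
end
end

section
/- Let M and N be matrices of dimensions k×p and k×q respectively, such that the concatenated matrix (M:N) has full row rank k (k ≥ 1, p ≥ 1, q ≥ 1). Let t ∈ ℝᵏ, and let V be a random vector in ℝᵖ whose distribution assigns positive mass to every nonempty open subset of ℝᵖ. Define f(x) = P(MV ≤ t + Nx) for x ∈ ℝ^q. If one of the rows of M consists entirely of zeros, then there exist x₀ ∈ ℝ^q, z ∈ ℝ^q, and a constant c > 0 such that f(x₀ + δz) ≥ c and f(x₀ − δz) = 0 for every sufficiently small δ > 0; in particular f is discontinuous at x₀. -/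
/-!
Row `i₀` of `M` vanishes, so the `i₀`-th constraint of `M v ≤ t + N x` reads `0 ≤ (t + N x)_{i₀}`:
it does not involve `v`, and the feasible set is all-or-nothing in that row. Full row rank of
`(M:N)` makes row `i₀` of `N` nonzero, so along `z = N_{i₀}` the quantity `(t + N x)_{i₀}` moves at
the positive rate `‖N_{i₀}‖²`; it also lets us pick `(a, x₀)` with `(t + N x₀)_{i₀} = 0` and every
other slack `(t + N x₀ - M a)_i = 1`. For small `δ > 0` the feasible set at `x₀ - δz` is then empty,
while at `x₀ + δz` it contains the fixed open neighbourhood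
`{v | (M v)_i < (M a)_i + 1/2 for i ≠ i₀}` of `a`, whose mass is positive.
-/

open MeasureTheory Matrix Filter Topology

namespace PMS

section RowRank

variable {m n K : Type*} [Fintype m] [Fintype n] [Field K]

theorem mulVec_surjective_of_rank_eq_card {A : Matrix m n K} (h : A.rank = Fintype.card m) :
    Function.Surjective A.mulVec := by
  have hrange : LinearMap.range A.mulVecLin = ⊤ :=
    Submodule.eq_top_of_finrank_eq (by rw [← Matrix.rank, h, Module.finrank_fintype_fun_eq_card])
  exact LinearMap.range_eq_top.1 hrange

theorem row_ne_zero_of_rank_eq_card {A : Matrix m n K} (h : A.rank = Fintype.card m) (i : m) :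
    A i ≠ 0 := by
  classical
  intro hi
  obtain ⟨w, hw⟩ := mulVec_surjective_of_rank_eq_card h (Pi.single i 1)
  have := congrFun hw i
  simp [mulVec, hi] at this

variable {l : Type*} [Fintype l] {M : Matrix m n K} {N : Matrix m l K}

theorem exists_mulVec_add_mulVec_eq (h : (fromCols M N).rank = Fintype.card m) (b : m → K) :
    ∃ v x, M *ᵥ v + N *ᵥ x = b := by
  obtain ⟨w, hw⟩ := mulVec_surjective_of_rank_eq_card h b
  exact ⟨w ∘ Sum.inl, w ∘ Sum.inr, by rw [← fromCols_mulVec_sumElim, Sum.elim_comp_inl_inr, hw]⟩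

theorem row_ne_zero_of_fromCols_rank_eq_card (h : (fromCols M N).rank = Fintype.card m) {i : m}
    (hM : M i = 0) : N i ≠ 0 := by
  intro hN
  apply row_ne_zero_of_rank_eq_card h i
  ext (j | j) <;> simp [hM, hN]

end RowRank

section Polyhedron

variable {m n l : Type*} [Fintype n] [Fintype l]

theorem polyhedron_eq_empty_of_zero_row {M : Matrix m n ℝ} {b : m → ℝ} {i : m} (hM : M i = 0)
    (hb : b i < 0) : {v | M *ᵥ v ≤ b} = ∅ := by
  refine Set.eq_empty_of_forall_notMem fun v hv => hb.not_ge ?_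
  simpa [mulVec, hM] using hv i

theorem exists_open_subset_polyhedron_and_empty_polyhedron [Finite m] [DecidableEq m]
    {M : Matrix m n ℝ} {N : Matrix m l ℝ} (t : m → ℝ)
    (hsurj : ∀ b, ∃ v x, M *ᵥ v + N *ᵥ x = b) {i₀ : m} (hM : M i₀ = 0) (hN : N i₀ ≠ 0) :
    ∃ (x₀ z : l → ℝ) (U : Set (n → ℝ)), IsOpen U ∧ U.Nonempty ∧
      ∀ᶠ δ in 𝓝[>] (0 : ℝ), U ⊆ {v | M *ᵥ v ≤ t + N *ᵥ (x₀ + δ • z)} ∧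
        {v | M *ᵥ v ≤ t + N *ᵥ (x₀ - δ • z)} = ∅ := by
  set y : m → ℝ := 1 - Pi.single i₀ 1
  obtain ⟨v, x₀, hvx⟩ := hsurj (y - t)
  set a := -v
  set z := N i₀
  have hslack : t + N *ᵥ x₀ = M *ᵥ a + y := by rw [mulVec_neg]; linear_combination hvx
  have hMi₀ : ∀ w, (M *ᵥ w) i₀ = 0 := fun w => by simp [mulVec, hM]
  have hz : 0 < (N *ᵥ z) i₀ := dotProduct_self_star_pos_iff.2 hN
  let U : Set (n → ℝ) :=
    (M *ᵥ ·) ⁻¹' Set.pi {i₀}ᶜ fun i => Set.Iio ((M *ᵥ a) i + 1 / 2)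
  have hUopen : IsOpen U :=
    (isOpen_set_pi (Set.toFinite _) fun _ _ => isOpen_Iio).preimage
      (continuous_const.matrix_mulVec continuous_id)
  have haU : a ∈ U := fun i _ => by simp only [Set.mem_Iio]; linarith
  have hsmall : ∀ᶠ δ in 𝓝[>] (0 : ℝ), 0 < δ ∧ ∀ i, -(1 / 2) < δ * (N *ᵥ z) i := by
    refine eventually_mem_nhdsWithin.and (eventually_all.2 fun i => ?_)
    have hlim : Tendsto (fun δ : ℝ => δ * (N *ᵥ z) i) (𝓝[>] 0) (𝓝 0) :=
      ((continuous_mul_const _).tendsto' 0 0 (zero_mul _)).mono_left nhdsWithin_le_nhds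
    exact hlim.eventually_const_lt (by norm_num)
  refine ⟨x₀, z, U, hUopen, ⟨a, haU⟩, hsmall.mono fun δ ⟨hδ, hδz⟩ => ⟨?_, ?_⟩⟩
  · intro w hw i
    rw [mulVec_add, mulVec_smul, ← add_assoc, hslack]
    simp only [Pi.add_apply, Pi.smul_apply, smul_eq_mul]
    by_cases hi : i = i₀
    · subst hi
      simp only [hMi₀, y, Pi.sub_apply, Pi.one_apply, Pi.single_eq_same, sub_self]
      positivity
    · have hwi : (M *ᵥ w) i < (M *ᵥ a) i + 1 / 2 := hw i hi
      have hyi : y i = 1 := by simp [y, hi]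
      linarith [hδz i]
  · refine polyhedron_eq_empty_of_zero_row hM ?_
    rw [mulVec_sub, mulVec_smul, ← add_sub_assoc, hslack]
    simp only [Pi.sub_apply, Pi.add_apply, Pi.smul_apply, smul_eq_mul, hMi₀, y, Pi.one_apply,
      Pi.single_eq_same]
    linarith [mul_pos hδ hz]

end Polyhedron

theorem not_continuousAt_of_jump {E : Type*} [AddCommGroup E] [Module ℝ E] [TopologicalSpace E]
    [IsTopologicalAddGroup E] [ContinuousSMul ℝ E] {f : E → ℝ} {x₀ z : E} {c : ℝ} (hc : 0 < c)
    (hplus : ∀ᶠ δ in 𝓝[>] (0 : ℝ), c ≤ f (x₀ + δ • z))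
    (hminus : ∀ᶠ δ in 𝓝[>] (0 : ℝ), f (x₀ - δ • z) = 0) : ¬ ContinuousAt f x₀ := by
  intro hf
  have hplus_lim : Tendsto (fun δ : ℝ => f (x₀ + δ • z)) (𝓝[>] 0) (𝓝 (f x₀)) :=
    hf.tendsto.comp <| ((by fun_prop : Continuous fun δ : ℝ => x₀ + δ • z).tendsto' 0 x₀
      (by simp)).mono_left nhdsWithin_le_nhds
  have hminus_lim : Tendsto (fun δ : ℝ => f (x₀ - δ • z)) (𝓝[>] 0) (𝓝 (f x₀)) :=
    hf.tendsto.comp <| ((by fun_prop : Continuous fun δ : ℝ => x₀ - δ • z).tendsto' 0 x₀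
      (by simp)).mono_left nhdsWithin_le_nhds
  have hge : c ≤ f x₀ := ge_of_tendsto hplus_lim hplus
  have hzero : f x₀ = 0 :=
    tendsto_nhds_unique hminus_lim (tendsto_const_nhds.congr' (hminus.mono fun _ h => h.symm))
  linarith

theorem jump_of_zero_row_general
    {k p q : ℕ}
    (M : Matrix (Fin k) (Fin p) ℝ) (N : Matrix (Fin k) (Fin q) ℝ)
    (hrank : (Matrix.fromCols M N).rank = k)
    (t : Fin k → ℝ)
    (μ : Measure (Fin p → ℝ)) [IsProbabilityMeasure μ]
    (hμ : ∀ U : Set (Fin p → ℝ), IsOpen U → U.Nonempty → 0 < μ U)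
    (hzero : ∃ i₀ : Fin k, ∀ j : Fin p, M i₀ j = 0) :
    ∃ (x₀ z : Fin q → ℝ) (c : ℝ), 0 < c ∧
      (∃ δ₀ : ℝ, 0 < δ₀ ∧ ∀ δ : ℝ, 0 < δ → δ < δ₀ →
        c ≤ (μ { v | M *ᵥ v ≤ t + N *ᵥ (x₀ + δ • z) }).toReal ∧
          (μ { v | M *ᵥ v ≤ t + N *ᵥ (x₀ - δ • z) }).toReal = 0) ∧
      ¬ ContinuousAt (fun x : Fin q → ℝ => (μ { v | M *ᵥ v ≤ t + N *ᵥ x }).toReal)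
        x₀ := by
  obtain ⟨i₀, hi₀⟩ := hzero
  have hM : M i₀ = 0 := funext hi₀
  replace hrank : (fromCols M N).rank = Fintype.card (Fin k) :=
    hrank.trans (Fintype.card_fin k).symm
  obtain ⟨x₀, z, U, hUopen, hUne, hU⟩ := exists_open_subset_polyhedron_and_empty_polyhedron t
    (exists_mulVec_add_mulVec_eq hrank) hM (row_ne_zero_of_fromCols_rank_eq_card hrank hM)
  set f := fun x : Fin q → ℝ => (μ { v | M *ᵥ v ≤ t + N *ᵥ x }).toReal
  have hc : 0 < (μ U).toReal := ENNReal.toReal_pos (hμ U hUopen hUne).ne' (measure_ne_top μ U)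
  have hjump : ∀ᶠ δ in 𝓝[>] (0 : ℝ), (μ U).toReal ≤ f (x₀ + δ • z) ∧ f (x₀ - δ • z) = 0 :=
    hU.mono fun δ ⟨hsub, hempty⟩ =>
      ⟨ENNReal.toReal_mono (measure_ne_top μ _) (measure_mono hsub), by simp [f, hempty]⟩
  obtain ⟨δ₀, hδ₀, hIoo⟩ := mem_nhdsGT_iff_exists_Ioo_subset.1 hjump
  exact ⟨x₀, z, (μ U).toReal, hc, ⟨δ₀, hδ₀, fun δ hδ hδ₀ => hIoo ⟨hδ, hδ₀⟩⟩,
    not_continuousAt_of_jump hc (hjump.mono fun _ h => h.1) (hjump.mono fun _ h => h.2)⟩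

/-- Lemma A.2: if `(M:N)` has full row rank `k` and some row of `M`
vanishes, then `f(x) = P(MV ≤ t + Nx)` jumps: there are `x₀`, `z` and `c > 0` with
`f(x₀ + δz) ≥ c` and `f(x₀ − δz) = 0` for all sufficiently small `δ > 0`; in
particular `f` is discontinuous at `x₀`. -/
theorem jump_of_zero_row
    {k p q : ℕ} (hk : 1 ≤ k) (hp : 1 ≤ p) (hq : 1 ≤ q)
    (M : Matrix (Fin k) (Fin p) ℝ) (N : Matrix (Fin k) (Fin q) ℝ)
    (hrank : (Matrix.fromCols M N).rank = k)
    (t : Fin k → ℝ)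
    (μ : Measure (Fin p → ℝ)) [IsProbabilityMeasure μ]
    (hμ : ∀ U : Set (Fin p → ℝ), IsOpen U → U.Nonempty → 0 < μ U)
    (hzero : ∃ i₀ : Fin k, ∀ j : Fin p, M i₀ j = 0) :
    ∃ (x₀ z : Fin q → ℝ) (c : ℝ), 0 < c ∧
      (∃ δ₀ : ℝ, 0 < δ₀ ∧ ∀ δ : ℝ, 0 < δ → δ < δ₀ →
        c ≤ (μ { v | M *ᵥ v ≤ t + N *ᵥ (x₀ + δ • z) }).toReal ∧
          (μ { v | M *ᵥ v ≤ t + N *ᵥ (x₀ - δ • z) }).toReal = 0) ∧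
      ¬ ContinuousAt (fun x : Fin q → ℝ => (μ { v | M *ᵥ v ≤ t + N *ᵥ x }).toReal)
        x₀ :=
  jump_of_zero_row_general M N hrank t μ hμ hzero

end PMS
end

section
/- Let Z be a random vector with values in ℝᵖ (p ≥ 1) whose distribution is absolutely continuous with respect to Lebesgue measure on ℝᵖ, and let B be a k×p matrix (k ≥ 1). Then the cdf t ↦ P(BZ ≤ t) of BZ is discontinuous at a point t ∈ ℝᵏ if and only if P(BZ ≤ t) > 0 and there exists an index i₀, 1 ≤ i₀ ≤ k, such that the i₀-th row of B is the zero row and the i₀-th coordinate of t is zero. -/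
open MeasureTheory Matrix

noncomputable section

/-! The cdf `F s = ν (Iic s)` of a finite measure `ν` on `ℝᵏ` tends, by dominated convergence,
to `ν (Iic t)` as `s → t` as soon as `ν` does not charge the upper face
`Iic t \ {x | ∀ i, x i < t i}`, while along `s = t - ε` it tends to the measure of the open
orthant; so `F` is continuous at `t` iff the face is `ν`-null. For `ν` the law of `BZ`, the face
lies in the union of the hyperplanes `{z | (Bz)ᵢ = tᵢ}`, which are Lebesgue-null unless row `i`
of `B` vanishes; and if row `i₀` vanishes with `t i₀ = 0`, then `BZ` lies on the face whenever
`BZ ≤ t`. -/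

namespace PMS

open Filter Set Topology

section OrthantCDF

variable {ι : Type*} [Fintype ι]

lemma eventually_mem_Iic_iff_of_notMem_Iic_diff_pi_Iio {t x : ι → ℝ}
    (hx : x ∉ Iic t \ univ.pi fun i => Iio (t i)) :
    ∀ᶠ s in 𝓝 t, x ∈ Iic s ↔ x ∈ Iic t := by
  by_cases hbox : x ∈ univ.pi fun i => Iio (t i)
  · have hopen : IsOpen (univ.pi fun i => Ioi (x i)) :=
      isOpen_set_pi finite_univ fun _ _ => isOpen_Ioi
    filter_upwards [hopen.mem_nhds fun i _ => hbox i trivial] with s hs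
    exact iff_of_true (fun i => (hs i trivial).le) fun i => (hbox i trivial).le
  · obtain ⟨i, hi⟩ : ∃ i, t i < x i := by
      simpa [hbox, Pi.le_def] using hx
    filter_upwards [(continuous_apply i).continuousAt.eventually (gt_mem_nhds hi)] with s hs
    exact iff_of_false (fun h => (h i).not_gt hs) fun h => (h i).not_gt hi

lemma eventually_mem_Iic_sub_const_iff (t x : ι → ℝ) :
    ∀ᶠ ε in 𝓝[>] 0, x ∈ Iic (t - Function.const ι ε) ↔ x ∈ univ.pi fun i => Iio (t i) := by
  by_cases hbox : x ∈ univ.pi fun i => Iio (t i)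
  · have : ∀ i, ∀ᶠ ε in 𝓝[>] (0 : ℝ), ε ≤ t i - x i := fun i =>
      nhdsWithin_le_nhds (eventually_le_nhds (sub_pos.2 (hbox i trivial)))
    filter_upwards [eventually_all.2 this] with ε hε
    refine iff_of_true (fun i => ?_) hbox
    simp only [Pi.sub_apply, Function.const_apply]
    linarith [hε i]
  · obtain ⟨i, hi⟩ : ∃ i, t i ≤ x i := by
      simpa using hbox
    filter_upwards [self_mem_nhdsWithin] with ε (hε : 0 < ε)
    refine iff_of_false (fun h => ?_) hbox
    have := h i
    simp only [Pi.sub_apply, Function.const_apply] at this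
    linarith

variable (ν : Measure (ι → ℝ)) [IsFiniteMeasure ν] (t : ι → ℝ)

lemma tendsto_measure_Iic_of_measure_Iic_diff_pi_Iio
    (h : ν (Iic t \ univ.pi fun i => Iio (t i)) = 0) :
    Tendsto (fun s => ν (Iic s)) (𝓝 t) (𝓝 (ν (Iic t))) :=
  tendsto_measure_of_ae_tendsto_indicator_of_isFiniteMeasure _ measurableSet_Iic
    (fun _ => measurableSet_Iic)
    ((measure_eq_zero_iff_ae_notMem.1 h).mono
      fun _ => eventually_mem_Iic_iff_of_notMem_Iic_diff_pi_Iio)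

lemma tendsto_measure_Iic_sub_const :
    Tendsto (fun ε => ν (Iic (t - Function.const ι ε))) (𝓝[>] 0)
      (𝓝 (ν (univ.pi fun i => Iio (t i)))) :=
  tendsto_measure_of_tendsto_indicator_of_isFiniteMeasure _ ν (fun _ => measurableSet_Iic)
    (eventually_mem_Iic_sub_const_iff t)

theorem continuousAt_measureReal_Iic_iff :
    ContinuousAt (fun s => ν.real (Iic s)) t ↔ ν (Iic t \ univ.pi fun i => Iio (t i)) = 0 := by
  refine ⟨fun hcont => ?_, fun h => (ENNReal.tendsto_toReal (measure_ne_top ν _)).comp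
    (tendsto_measure_Iic_of_measure_Iic_diff_pi_Iio ν t h)⟩
  have hsub : Tendsto (fun ε : ℝ => t - Function.const ι ε) (𝓝[>] 0) (𝓝 t) := by
    refine tendsto_nhdsWithin_of_tendsto_nhds ((by fun_prop : Continuous fun ε : ℝ =>
      t - Function.const ι ε).tendsto' 0 t (by simp))
  have heq : ν.real (univ.pi fun i => Iio (t i)) = ν.real (Iic t) :=
    tendsto_nhds_unique ((ENNReal.tendsto_toReal (measure_ne_top ν _)).comp
      (tendsto_measure_Iic_sub_const ν t)) (hcont.tendsto.comp hsub)
  have hbox : (univ.pi fun i => Iio (t i)) ⊆ Iic t := fun _ hx i => (hx i trivial).le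
  rw [← measureReal_eq_zero_iff, measureReal_sdiff hbox
    (MeasurableSet.univ_pi fun _ => measurableSet_Iio), heq, sub_self]

end OrthantCDF

section Hyperplane

variable {ι : Type*} [Fintype ι]

lemma addHaar_setOf_dotProduct_eq (μ : Measure (ι → ℝ)) [μ.IsAddHaarMeasure]
    {v : ι → ℝ} (hv : v ≠ 0) (c : ℝ) : μ {x | v ⬝ᵥ x = c} = 0 := by
  classical
  obtain ⟨j, hj⟩ : ∃ j, v j ≠ 0 := Function.ne_iff.1 hv
  let f : (ι → ℝ) →ₗ[ℝ] ℝ := dotProductBilin ℝ ℝ v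
  let x₀ : ι → ℝ := Pi.single j (c / v j)
  have hx₀ : v ⬝ᵥ x₀ = c := by simp [x₀, mul_div_cancel₀ _ hj]
  have hker : LinearMap.ker f ≠ ⊤ := by
    intro h
    have : Pi.single j 1 ∈ LinearMap.ker f := h ▸ Submodule.mem_top
    exact hj (by simpa [f] using this)
  have hset : {x | v ⬝ᵥ x = c} = (AffineSubspace.mk' x₀ (LinearMap.ker f) : Set (ι → ℝ)) := by
    ext x
    simp [AffineSubspace.mem_mk', f, dotProduct_sub, hx₀, sub_eq_zero]
  rw [hset]
  refine Measure.addHaar_affineSubspace μ _ fun h => hker ?_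
  rw [← AffineSubspace.direction_mk' x₀ (LinearMap.ker f), h, AffineSubspace.direction_top]

lemma measure_dotProduct_eq_eq_zero {Ω : Type*} [MeasurableSpace Ω] {μ : Measure Ω}
    {Z : Ω → ι → ℝ} (hZ : Measurable Z) (habs : μ.map Z ≪ volume) {v : ι → ℝ} {c : ℝ}
    (h : v ≠ 0 ∨ c ≠ 0) : μ {ω | v ⬝ᵥ Z ω = c} = 0 := by
  rcases eq_or_ne v 0 with rfl | hv
  · simp [(h.resolve_left (not_not.2 rfl)).symm]
  · have hmeas : MeasurableSet {x : ι → ℝ | v ⬝ᵥ x = c} :=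
      measurableSet_eq_fun (by fun_prop) measurable_const
    exact (Measure.map_apply hZ hmeas).symm.trans
      (habs (addHaar_setOf_dotProduct_eq volume hv c))

end Hyperplane

section Face

variable {ι : Type*} (ν : Measure (ι → ℝ)) (t : ι → ℝ)

lemma measure_Iic_diff_pi_Iio_eq_zero [Countable ι] (h : ∀ i, ν {x | x i = t i} = 0) :
    ν (Iic t \ univ.pi fun i => Iio (t i)) = 0 := by
  refine measure_mono_null (fun x ⟨hle, hlt⟩ => ?_) (measure_iUnion_null h)
  obtain ⟨i, hi⟩ : ∃ i, t i ≤ x i := by simpa using hlt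
  exact mem_iUnion.2 ⟨i, (hle i).antisymm hi⟩

lemma measure_Iic_diff_pi_Iio_of_ae_apply_eq {i : ι} (h : ∀ᵐ x ∂ν, x i = t i) :
    ν (Iic t \ univ.pi fun i => Iio (t i)) = ν (Iic t) := by
  refine measure_congr (eventuallyEq_set.2 (h.mono fun x hx => ?_))
  exact ⟨fun h => h.1, fun h => ⟨h, fun hlt => (hlt i trivial).ne hx⟩⟩

end Face

theorem cdf_of_linear_image_discontinuous_iff_general
    {k p : ℕ}
    {Ω : Type*} [MeasurableSpace Ω] (μ : Measure Ω) [IsProbabilityMeasure μ]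
    (Z : Ω → Fin p → ℝ) (hZ : Measurable Z)
    (habs : μ.map Z ≪ (volume : Measure (Fin p → ℝ)))
    (B : Matrix (Fin k) (Fin p) ℝ) (t : Fin k → ℝ) :
    ¬ ContinuousAt (fun s : Fin k → ℝ => (μ { ω | B *ᵥ Z ω ≤ s }).toReal) t ↔
      (0 < (μ { ω | B *ᵥ Z ω ≤ t }).toReal ∧
        ∃ i₀ : Fin k, (∀ j : Fin p, B i₀ j = 0) ∧ t i₀ = 0) := by
  have hX : Measurable fun ω => B *ᵥ Z ω := by fun_prop
  set ν := μ.map fun ω => B *ᵥ Z ω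
  have hcdf (s : Fin k → ℝ) : (μ {ω | B *ᵥ Z ω ≤ s}).toReal = ν.real (Iic s) := by
    rw [measureReal_def, Measure.map_apply hX measurableSet_Iic]; rfl
  simp only [hcdf]
  rw [continuousAt_measureReal_Iic_iff]
  by_cases hdeg : ∃ i₀ : Fin k, (∀ j : Fin p, B i₀ j = 0) ∧ t i₀ = 0
  · obtain ⟨i₀, hrow, hti⟩ := hdeg
    have hae : ∀ᵐ x ∂ν, x i₀ = t i₀ :=
      (ae_map_iff hX.aemeasurable (measurableSet_eq_fun (by fun_prop) measurable_const)).2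
        (ae_of_all _ fun ω => by simp [mulVec, dotProduct, hrow, hti])
    rw [measure_Iic_diff_pi_Iio_of_ae_apply_eq ν t hae, measureReal_nonneg.lt_iff_ne',
      measureReal_ne_zero_iff]
    exact ⟨fun h => ⟨h, i₀, hrow, hti⟩, And.left⟩
  · have hface : ν (Iic t \ univ.pi fun i => Iio (t i)) = 0 := by
      refine measure_Iic_diff_pi_Iio_eq_zero ν t fun i => ?_
      rw [Measure.map_apply hX (measurableSet_eq_fun (by fun_prop) measurable_const)]
      refine measure_dotProduct_eq_eq_zero hZ habs (v := B i) ?_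
      contrapose! hdeg
      exact ⟨i, fun j => congrFun hdeg.1 j, hdeg.2⟩
    exact iff_of_false (not_not.2 hface) fun h => hdeg h.2

/-- Lemma `linsert`: for `Z` an absolutely continuous random vector
in `ℝ^p` and `B` a `k × p` matrix, the cdf of `BZ` is discontinuous at `t` if and only
if `P(BZ ≤ t) > 0` and for some `i₀` the `i₀`-th row of `B` is zero and `t_{i₀} = 0`. -/
theorem cdf_of_linear_image_discontinuous_iff
    {k p : ℕ} (hk : 1 ≤ k) (hp : 1 ≤ p)
    {Ω : Type*} [MeasurableSpace Ω] (μ : Measure Ω) [IsProbabilityMeasure μ]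
    (Z : Ω → Fin p → ℝ) (hZ : Measurable Z)
    (habs : μ.map Z ≪ (volume : Measure (Fin p → ℝ)))
    (B : Matrix (Fin k) (Fin p) ℝ) (t : Fin k → ℝ) :
    ¬ ContinuousAt (fun s : Fin k → ℝ => (μ { ω | B *ᵥ Z ω ≤ s }).toReal) t ↔
      (0 < (μ { ω | B *ᵥ Z ω ≤ t }).toReal ∧
        ∃ i₀ : Fin k, (∀ j : Fin p, B i₀ j = 0) ∧ t i₀ = 0) :=
  cdf_of_linear_image_discontinuous_iff_general μ Z hZ habs B t

end PMS
end
end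

section
/- Let U be a random vector with values in ℝᵏ and let tₙ ∈ ℝᵏ be a sequence converging to t ∈ ℝᵏ. Then every accumulation point of the sequence P(U ≤ tₙ) is of the form P(U_{i₁} ≤ t_{i₁}, …, U_{iₘ} ≤ t_{iₘ}, U_{i_{m+1}} < t_{i_{m+1}}, …, U_{i_k} < t_{i_k}) for some m with 0 ≤ m ≤ k and some permutation (i₁, …, i_k) of (1, …, k). -/
/-!
Group the indices `n` by the set `S` of coordinates `i` with `t i ≤ tₙ i`. There are finitely
many such sets, so `α` is already a cluster point along the indices of one fixed pattern `S`.
Along those indices the events `{U ≤ tₙ}` converge pointwise to `{U_i ≤ t_i for i ∈ S,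
U_i < t_i for i ∉ S}`, so by dominated convergence their probabilities converge to its
probability, which must then be `α`. Listing the coordinates of `S` first gives the permutation.
-/

open MeasureTheory Filter Topology Finset

theorem MapClusterPt.exists_inf_principal_fiber {ι β X : Type*} [TopologicalSpace X]
    [Finite β] {x : X} {l : Filter ι} {u : ι → X} (h : MapClusterPt x l u) (p : ι → β) :
    ∃ b, MapClusterPt x (l ⊓ 𝓟 (p ⁻¹' {b})) u := by
  by_contra! hnone
  simp only [mapClusterPt_iff_frequently, not_forall, not_frequently, eventually_inf_principal]
    at hnone
  choose s hs hsu using hnone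
  obtain ⟨n, hn, hnot⟩ := ((mapClusterPt_iff_frequently.1 h _ (iInter_mem.2 hs)).and_eventually
    (eventually_all.2 hsu)).exists
  exact hnot (p n) rfl (Set.mem_iInter.1 hn (p n))

section Order

variable {ι α : Type*} [LinearOrder α] [TopologicalSpace α] [OrderTopology α]
  {l : Filter ι} {s : ι → α} {a : α}

theorem Filter.Tendsto.eventually_le_iff_le_of_ge (hs : Tendsto s l (𝓝 a))
    (hge : ∀ᶠ n in l, a ≤ s n) (x : α) : ∀ᶠ n in l, x ≤ s n ↔ x ≤ a := by
  rcases le_or_gt x a with hxa | hax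
  · filter_upwards [hge] with n hn using iff_of_true (hxa.trans hn) hxa
  · filter_upwards [hs.eventually_lt_const hax] with n hn using
      iff_of_false hn.not_ge hax.not_ge

theorem Filter.Tendsto.eventually_le_iff_lt_of_lt (hs : Tendsto s l (𝓝 a))
    (hlt : ∀ᶠ n in l, s n < a) (x : α) : ∀ᶠ n in l, x ≤ s n ↔ x < a := by
  rcases lt_or_ge x a with hxa | hax
  · filter_upwards [hs.eventually_const_lt hxa] with n hn using iff_of_true hn.le hxa
  · filter_upwards [hlt] with n hn using
      iff_of_false (fun h => (h.trans_lt hn).not_ge hax) hax.not_gt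

def mixedLowerOrthant {κ : Type*} (a : κ → α) (S : Set κ) : Set (κ → α) :=
  {x | ∀ i, (i ∈ S → x i ≤ a i) ∧ (i ∉ S → x i < a i)}

theorem Filter.Tendsto.eventually_le_iff_mem_mixedLowerOrthant {κ : Type*} [Finite κ]
    {s : ι → κ → α} {a : κ → α} (hs : Tendsto s l (𝓝 a)) {S : Set κ}
    (hS : ∀ᶠ n in l, ∀ i, i ∈ S ↔ a i ≤ s n i) (x : κ → α) :
    ∀ᶠ n in l, x ≤ s n ↔ x ∈ mixedLowerOrthant a S := by
  have hcoord : ∀ i, ∀ᶠ n in l, x i ≤ s n i ↔ (i ∈ S → x i ≤ a i) ∧ (i ∉ S → x i < a i) := by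
    intro i
    have hsi : Tendsto (fun n => s n i) l (𝓝 (a i)) := tendsto_pi_nhds.1 hs i
    by_cases hi : i ∈ S
    · filter_upwards [hsi.eventually_le_iff_le_of_ge (hS.mono fun n hn => (hn i).1 hi) (x i)]
        with n hn
      simp [hi, hn]
    · filter_upwards [hsi.eventually_le_iff_lt_of_lt
        (hS.mono fun n hn => not_le.1 (mt (hn i).2 hi)) (x i)] with n hn
      simp [hi, hn]
  filter_upwards [eventually_all.2 hcoord] with n hn using Pi.le_def.trans (forall_congr' hn)

end Order

theorem Finset.exists_perm_apply_mem_iff_lt_card {k : ℕ} (S : Finset (Fin k)) :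
    ∃ e : Equiv.Perm (Fin k), ∀ j, e j ∈ S ↔ (j : ℕ) < #S := by
  have hcard : #{j : Fin k | (j : ℕ) < #S} = #S := by
    simpa [Fin.card_filter_val_lt] using S.card_le_univ
  obtain ⟨e, he⟩ := Equiv.Perm.exists_map_finset_eq _ S hcard
  exact ⟨e, fun j => by nth_rw 1 [← he]; simp⟩

namespace PMS

/-- every accumulation point of `P(U ≤ tₙ)` for `tₙ → t` is of the
form `P(U_{i₁} ≤ t_{i₁}, …, U_{iₘ} ≤ t_{iₘ}, U_{i_{m+1}} < t_{i_{m+1}}, …, U_{i_k} < t_{i_k})`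
for some `m ≤ k` and some permutation `(i₁,…,i_k)` of `(1,…,k)`. -/
theorem accumulation_points_of_cdf_along_sequence
    {k : ℕ} {Ω : Type*} [MeasurableSpace Ω] (μ : Measure Ω) [IsProbabilityMeasure μ]
    (U : Ω → Fin k → ℝ) (hU : Measurable U)
    (tseq : ℕ → Fin k → ℝ) (t : Fin k → ℝ)
    (htseq : Tendsto tseq atTop (nhds t))
    (α : ℝ)
    (hacc : MapClusterPt α atTop
      (fun n : ℕ => (μ { ω | ∀ i, U ω i ≤ tseq n i }).toReal)) :
    ∃ m : ℕ, m ≤ k ∧ ∃ e : Equiv.Perm (Fin k),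
      α = (μ { ω | ∀ j : Fin k,
            (((j : ℕ) < m → U ω (e j) ≤ t (e j)) ∧
              (m ≤ (j : ℕ) → U ω (e j) < t (e j))) }).toReal := by
  let pattern (n : ℕ) : Finset (Fin k) := {i | t i ≤ tseq n i}
  obtain ⟨S, hαS⟩ := hacc.exists_inf_principal_fiber pattern
  have hpattern : ∀ᶠ n in atTop ⊓ 𝓟 (pattern ⁻¹' {S}),
      ∀ i, i ∈ (S : Set (Fin k)) ↔ t i ≤ tseq n i := by
    filter_upwards [mem_inf_of_right (mem_principal_self _)] with n (rfl : pattern n = S)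
    simp [pattern]
  have hlim := tendsto_measure_of_tendsto_indicator_of_isFiniteMeasure _ μ
    (fun n => hU measurableSet_Iic) fun ω =>
      (htseq.mono_left inf_le_left).eventually_le_iff_mem_mixedLowerOrthant hpattern (U ω)
  obtain ⟨e, he⟩ := S.exists_perm_apply_mem_iff_lt_card
  refine ⟨#S, by simpa using S.card_le_univ, e, ?_⟩
  have hevent : {ω | ∀ j : Fin k, ((j : ℕ) < #S → U ω (e j) ≤ t (e j)) ∧
      (#S ≤ (j : ℕ) → U ω (e j) < t (e j))} = U ⁻¹' mixedLowerOrthant t S := by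
    ext ω
    simp only [Set.mem_ofPred_eq, Set.mem_preimage, mixedLowerOrthant, ← Nat.not_lt, ← he]
    exact e.forall_congr_right (q := fun i => (i ∈ S → U ω i ≤ t i) ∧ (i ∉ S → U ω i < t i))
  rw [hevent]
  exact eq_of_nhds_neBot <|
    ClusterPt.mono hαS ((ENNReal.tendsto_toReal (measure_ne_top _ _)).comp hlim)

end PMS
end

section
/- Let τ > 0 and let Φ and φ denote the cdf and density of the standard normal distribution. Suppose F : ℝ → [0,∞) is continuous, satisfies lim_{x→−∞} F(x) = lim_{x→∞} F(x) = 0, and satisfies the functional equation F(x)·(Φ(x+τ) − Φ(x−τ)) = ∫_{x−τ}^{x+τ} F(z)φ(z) dz for every x ∈ ℝ. Then F is identically zero. -/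
/-!
Every solution `F` of the equation is `≤ 0`: otherwise, since `F` vanishes at `±∞`, it attains a
positive maximum `M`. At a maximiser `x` the equation says that the `φ`-weighted mean of `F` over
`[x - τ, x + τ]` equals `M`; as `φ > 0` this forces `F = M` on the whole interval, so the set
`{F = M}` is open as well as closed, hence all of `ℝ`, contradicting `F → 0`. The equation is
linear, so `-F` is a solution too, and therefore `F = 0`.
-/

open MeasureTheory Real

noncomputable section

namespace PMS

/-- The standard normal density `φ(z) = (2π)^{-1/2} e^{-z²/2}`. -/
def stdNormPdf (z : ℝ) : ℝ := (Real.sqrt (2 * π))⁻¹ * Real.exp (-z ^ 2 / 2)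

/-- The standard normal cdf `Φ(x) = ∫_{-∞}^x φ(z) dz`. -/
def stdNormCdf (x : ℝ) : ℝ := ∫ z in Set.Iic x, stdNormPdf z

lemma stdNormPdf_pos (z : ℝ) : 0 < stdNormPdf z := by
  unfold stdNormPdf
  positivity

lemma continuous_stdNormPdf : Continuous stdNormPdf := by
  unfold stdNormPdf
  fun_prop

lemma integrable_stdNormPdf : Integrable stdNormPdf := by
  have h : Integrable fun z : ℝ => Real.exp (-(1 / 2) * z ^ 2) :=
    integrable_exp_neg_mul_sq (by norm_num)
  refine (h.const_mul (√(2 * π))⁻¹).congr (ae_of_all _ fun z => ?_)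
  rw [stdNormPdf]
  ring_nf

lemma stdNormCdf_sub_stdNormCdf (a b : ℝ) :
    stdNormCdf b - stdNormCdf a = ∫ z in a..b, stdNormPdf z :=
  intervalIntegral.integral_Iic_sub_Iic integrable_stdNormPdf.integrableOn
    integrable_stdNormPdf.integrableOn

lemma eqOn_Icc_of_integral_mul_eq_const_mul {f w : ℝ → ℝ} {a b M : ℝ} (hab : a < b)
    (hf : ContinuousOn f (Set.Icc a b)) (hw : ContinuousOn w (Set.Icc a b))
    (hw_pos : ∀ x ∈ Set.Icc a b, 0 < w x) (hle : ∀ x ∈ Set.Icc a b, f x ≤ M)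
    (heq : ∫ x in a..b, f x * w x = ∫ x in a..b, M * w x) :
    Set.EqOn f (fun _ => M) (Set.Icc a b) := by
  intro y hy
  by_contra hne
  refine (intervalIntegral.integral_lt_integral_of_continuousOn_of_le_of_exists_lt hab
    (hf.mul hw) (continuousOn_const.mul hw) (fun x hx => ?_)
    ⟨y, hy, ?_⟩).ne heq
  · exact mul_le_mul_of_nonneg_right (hle x (Set.Ioc_subset_Icc_self hx))
      (hw_pos x (Set.Ioc_subset_Icc_self hx)).le
  · exact mul_lt_mul_of_pos_right ((hle y hy).lt_of_ne hne) (hw_pos y hy)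

lemma nonpos_of_forall_mul_stdNormCdf_sub_eq_integral (τ : ℝ) (hτ : 0 < τ) (F : ℝ → ℝ)
    (hFcont : Continuous F)
    (hFtop : Filter.Tendsto F Filter.atTop (nhds 0))
    (hFbot : Filter.Tendsto F Filter.atBot (nhds 0))
    (heq : ∀ x : ℝ,
      F x * (stdNormCdf (x + τ) - stdNormCdf (x - τ)) =
        ∫ z in (x - τ)..(x + τ), F z * stdNormPdf z) :
    ∀ x, F x ≤ 0 := by
  by_contra! ⟨x₀, hx₀⟩
  have hFcocompact : Filter.Tendsto F (Filter.cocompact ℝ) (nhds 0) := by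
    rw [cocompact_eq_atBot_atTop]
    exact hFbot.sup hFtop
  obtain ⟨z₀, hz₀⟩ : ∃ z₀, ∀ y, F y ≤ F z₀ :=
    hFcont.exists_forall_ge' x₀ (hFcocompact.eventually_le_const hx₀)
  have hwindow : ∀ x, F x = F z₀ → Set.EqOn F (fun _ => F z₀) (Set.Icc (x - τ) (x + τ)) := by
    intro x hx
    refine eqOn_Icc_of_integral_mul_eq_const_mul (by linarith) hFcont.continuousOn
      continuous_stdNormPdf.continuousOn (fun z _ => stdNormPdf_pos z) (fun z _ => hz₀ z) ?_
    rw [← heq x, intervalIntegral.integral_const_mul, ← stdNormCdf_sub_stdNormCdf, hx]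
  have hopen : IsOpen {x | F x = F z₀} := isOpen_iff_mem_nhds.mpr fun x hx =>
    Filter.mem_of_superset (Icc_mem_nhds (by linarith) (by linarith)) (hwindow x hx)
  have hconst : ∀ x, F x = F z₀ := Set.eq_univ_iff_forall.mp
    (IsClopen.eq_univ ⟨isClosed_eq hFcont continuous_const, hopen⟩ ⟨z₀, rfl⟩)
  have hFz₀ : F z₀ = 0 :=
    tendsto_nhds_unique (tendsto_const_nhds.congr fun x => (hconst x).symm) hFtop
  linarith [hz₀ x₀]

theorem functional_equation_forces_zero_general
    (τ : ℝ) (hτ : 0 < τ) (F : ℝ → ℝ)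
    (hFcont : Continuous F)
    (hFtop : Filter.Tendsto F Filter.atTop (nhds 0))
    (hFbot : Filter.Tendsto F Filter.atBot (nhds 0))
    (heq : ∀ x : ℝ,
      F x * (stdNormCdf (x + τ) - stdNormCdf (x - τ)) =
        ∫ z in (x - τ)..(x + τ), F z * stdNormPdf z) :
    ∀ x : ℝ, F x = 0 := by
  have hnonpos := nonpos_of_forall_mul_stdNormCdf_sub_eq_integral τ hτ F hFcont hFtop hFbot heq
  have hnonneg := nonpos_of_forall_mul_stdNormCdf_sub_eq_integral τ hτ (-F) hFcont.neg
    (by rw [← neg_zero]; exact hFtop.neg) (by rw [← neg_zero]; exact hFbot.neg) fun x => by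
      simp only [Pi.neg_apply, neg_mul, intervalIntegral.integral_neg, heq x]
  exact fun x => le_antisymm (hnonpos x) (neg_nonpos.mp (hnonneg x))

/-- **Statement 13** (from the proof of Lemma A.1, via Leeb (2002)): a continuous
nonnegative function `F` vanishing at `±∞` and satisfying
`F(x)(Φ(x+τ) − Φ(x−τ)) = ∫_{x−τ}^{x+τ} F(z) φ(z) dz` for all `x` is identically zero. -/
theorem functional_equation_forces_zero
    (τ : ℝ) (hτ : 0 < τ) (F : ℝ → ℝ)
    (hFcont : Continuous F) (hFnonneg : ∀ x, 0 ≤ F x)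
    (hFtop : Filter.Tendsto F Filter.atTop (nhds 0))
    (hFbot : Filter.Tendsto F Filter.atBot (nhds 0))
    (heq : ∀ x : ℝ,
      F x * (stdNormCdf (x + τ) - stdNormCdf (x - τ)) =
        ∫ z in (x - τ)..(x + τ), F z * stdNormPdf z) :
    ∀ x : ℝ, F x = 0 :=
  functional_equation_forces_zero_general τ hτ F hFcont hFtop hFbot heq

end PMS
end
end

section
/- Let θ ∈ ℝᴾ, γ ∈ ℝᴾ, σ > 0, and set p* = max{p₀(θ), O}. If C_∞^{(p)} = 0 for all p with p* < p ≤ P, then the limit cdf G_{∞,θ,σ,γ} coincides with Φ_{∞,P}, the cdf on ℝᵏ of the Gaussian distribution N(0, σ²AQ⁻¹A′); in particular it does not depend on γ. -/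
open MeasureTheory ProbabilityTheory Matrix Filter Topology Real

noncomputable section

namespace PMS

/-! ### Basic probability constructions -/

/-- Standard Gaussian measure on `ℝ^n`. -/
def stdGaussian (n : ℕ) : Measure (Fin n → ℝ) :=
  Measure.pi fun _ => gaussianReal 0 1

/-- The law `P_{n,θ,σ}` of `Y = Xθ + u`, `u ~ N(0, σ² Iₙ)`. -/
def lawY {n P : ℕ} (X : Matrix (Fin n) (Fin P) ℝ) (θ : Fin P → ℝ) (σ : ℝ) :
    Measure (Fin n → ℝ) :=
  (stdGaussian n).map fun u => X *ᵥ θ + σ • u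

/-- Euclidean norm of a vector in `ℝ^P`. -/
def euclNorm {P : ℕ} (v : Fin P → ℝ) : ℝ := Real.sqrt (∑ i, (v i) ^ 2)

/-- Total variation distance between two (probability) measures:
`sup_E |μ(E) − ν(E)|` over measurable sets `E`. -/
def tvDist {α : Type*} [MeasurableSpace α] (μ ν : Measure α) : ℝ :=
  ⨆ E : { s : Set α // MeasurableSet s }, |(μ E).toReal - (ν E).toReal|

/-! ### Matrix helpers -/

/-- First `p` columns of a matrix with `P` columns (zero columns if `p > P`). -/
def take {m : Type*} {P : ℕ} (X : Matrix m (Fin P) ℝ) (p : ℕ) : Matrix m (Fin p) ℝ :=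
  fun i j => if h : (j : ℕ) < P then X i ⟨j, h⟩ else 0

/-- Upper-left `p × p` block `Q[p:p]` of a `P × P` matrix. -/
def subSq {P : ℕ} (Q : Matrix (Fin P) (Fin P) ℝ) (p : ℕ) : Matrix (Fin p) (Fin p) ℝ :=
  fun i j =>
    if hi : (i : ℕ) < P then if hj : (j : ℕ) < P then Q ⟨i, hi⟩ ⟨j, hj⟩ else 0 else 0

/-- Off-diagonal block `Q[p:¬p]` (rows `1..p`, columns `p+1..P`). -/
def offBlock {P : ℕ} (Q : Matrix (Fin P) (Fin P) ℝ) (p : ℕ) :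
    Matrix (Fin p) (Fin (P - p)) ℝ :=
  fun i j =>
    if hi : (i : ℕ) < P then if hj : p + (j : ℕ) < P then Q ⟨i, hi⟩ ⟨p + j, hj⟩ else 0
    else 0

/-- Last `P − p` components `v[¬p]` of a vector `v ∈ ℝ^P`. -/
def vdrop {P : ℕ} (v : Fin P → ℝ) (p : ℕ) : Fin (P - p) → ℝ :=
  fun j => if h : p + (j : ℕ) < P then v ⟨p + j, h⟩ else 0

/-- Embed a vector of `ℝ^p` into `ℝ^P` by padding with zeros. -/
def padZero {P : ℕ} {p : ℕ} (v : Fin p → ℝ) : Fin P → ℝ :=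
  fun i => if h : (i : ℕ) < p then v ⟨i, h⟩ else 0

/-- `i`-th (0-based) component of a vector, `0` if out of range. -/
def comp {P : ℕ} (v : Fin P → ℝ) (i : ℕ) : ℝ := if h : i < P then v ⟨i, h⟩ else 0

/-- Last component `v_p` (1-based) of `v ∈ ℝ^p`. -/
def lastComp {p : ℕ} (v : Fin p → ℝ) : ℝ :=
  if h : 0 < p then v ⟨p - 1, Nat.sub_lt h one_pos⟩ else 0

/-- Last diagonal entry `M_{p,p}` (1-based) of a `p × p` matrix. -/
def lastEntry {p : ℕ} (M : Matrix (Fin p) (Fin p) ℝ) : ℝ :=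
  if h : 0 < p then M ⟨p - 1, Nat.sub_lt h one_pos⟩ ⟨p - 1, Nat.sub_lt h one_pos⟩ else 0

/-- The `p`-th (i.e. last) standard basis vector of `ℝ^p`. -/
def lastBasis (p : ℕ) : Fin p → ℝ := fun j => if (j : ℕ) = p - 1 then 1 else 0

open scoped Classical in
/-- A generalized inverse: any matrix `N` with `M * N * M = M` (such an `N`
always exists over a field); junk value `0` otherwise. -/
def ginv {k : ℕ} (M : Matrix (Fin k) (Fin k) ℝ) : Matrix (Fin k) (Fin k) ℝ :=
  if h : ∃ N, M * N * M = M then h.choose else 0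

open scoped Classical in
/-- Positive semidefinite square root of a matrix (junk value `0` if the matrix is
not positive semidefinite). -/
def msqrt {k : ℕ} (M : Matrix (Fin k) (Fin k) ℝ) : Matrix (Fin k) (Fin k) ℝ :=
  if h : M.PosSemidef then
    (h.1.eigenvectorUnitary : Matrix (Fin k) (Fin k) ℝ) *
      diagonal (Real.sqrt ∘ h.1.eigenvalues) *
      (star h.1.eigenvectorUnitary : Matrix (Fin k) (Fin k) ℝ)
  else 0

/-! ### Least squares, model selection, and the post-model-selection estimator -/

/-- Restricted least-squares estimator `θ̃(p)` based on the first `p` regressors. -/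
def thetaTilde {n P : ℕ} (X : Matrix (Fin n) (Fin P) ℝ) (p : ℕ) (y : Fin n → ℝ) :
    Fin P → ℝ :=
  padZero (((((take X p)ᵀ * take X p)⁻¹) * (take X p)ᵀ) *ᵥ y)

/-- Error variance estimator `σ̂² = (n−P)⁻¹ ‖Y − X θ̃(P)‖²` from the overall model. -/
def sigmaHatSq {n P : ℕ} (X : Matrix (Fin n) (Fin P) ℝ) (y : Fin n → ℝ) : ℝ :=
  ((n : ℝ) - P)⁻¹ * ∑ i, (y i - (X *ᵥ thetaTilde X P y) i) ^ 2

/-- `ξ_{n,p}`, the square root of the `p`-th diagonal element of `(X[p]'X[p]/n)⁻¹`. -/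
def xiFin {n P : ℕ} (X : Matrix (Fin n) (Fin P) ℝ) (p : ℕ) : ℝ :=
  Real.sqrt (lastEntry (((n : ℝ)⁻¹ • ((take X p)ᵀ * take X p))⁻¹))

/-- The test statistic `T_p = √n θ̃_p(p) / (σ̂ ξ_{n,p})` (with `T_0 = 0`). -/
def Tstat {n P : ℕ} (X : Matrix (Fin n) (Fin P) ℝ) (p : ℕ) (y : Fin n → ℝ) : ℝ :=
  if p = 0 then 0
  else Real.sqrt n * comp (thetaTilde X p y) (p - 1) /
    (Real.sqrt (sigmaHatSq X y) * xiFin X p)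

/-- The `general-to-specific` model selector `p̂ = max{p ≤ P : |T_p| ≥ c_p}`. -/
def phat {n P : ℕ} (X : Matrix (Fin n) (Fin P) ℝ) (c : ℕ → ℝ) (y : Fin n → ℝ) : ℕ :=
  sSup { p | p ≤ P ∧ c p ≤ |Tstat X p y| }

/-- The post-model-selection estimator `θ̃ = θ̃(p̂)`. -/
def pmsEst {n P : ℕ} (X : Matrix (Fin n) (Fin P) ℝ) (c : ℕ → ℝ) (y : Fin n → ℝ) :
    Fin P → ℝ :=
  thetaTilde X (phat X c y) y

/-- The finite-sample cdf `G_{n,θ,σ}(t) = P_{n,θ,σ}(√n A (θ̃ − θ) ≤ t)`. -/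
def Gfin {n P k : ℕ} (X : Matrix (Fin n) (Fin P) ℝ) (A : Matrix (Fin k) (Fin P) ℝ)
    (c : ℕ → ℝ) (θ : Fin P → ℝ) (σ : ℝ) (t : Fin k → ℝ) : ℝ :=
  ((lawY X θ σ) { y | ∀ i, Real.sqrt n * (A *ᵥ (pmsEst X c y - θ)) i ≤ t i }).toReal

/-- The law of `√n A (θ̃ − θ)`, i.e. the distribution whose cdf is `G_{n,θ,σ}`. -/
def GfinMeas {n P k : ℕ} (X : Matrix (Fin n) (Fin P) ℝ) (A : Matrix (Fin k) (Fin P) ℝ)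
    (c : ℕ → ℝ) (θ : Fin P → ℝ) (σ : ℝ) : Measure (Fin k → ℝ) :=
  (lawY X θ σ).map fun y => Real.sqrt n • (A *ᵥ (pmsEst X c y - θ))

/-! ### The nested models `M_p` and related limit quantities -/

/-- `M_p = {θ ∈ ℝ^P : θ_{p+1} = ⋯ = θ_P = 0}`. -/
def Mset (P : ℕ) (p : ℕ) : Set (Fin P → ℝ) := { θ | ∀ i : Fin P, p ≤ (i : ℕ) → θ i = 0 }

/-- The order `p₀(θ) = min{p : θ ∈ M_p}` of a parameter `θ`. -/
def p0 {P : ℕ} (θ : Fin P → ℝ) : ℕ := sInf { p | θ ∈ Mset P p }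

/-- `Δ_s(a,b) = P(|N − a| < b)` for `N ~ N(0, s²)` (for `s = 0`: indicator of `|a| < b`). -/
def Dg (s a b : ℝ) : ℝ := ((gaussianReal 0 ((s ^ 2).toNNReal)) { x | |x - a| < b }).toReal

/-- `C_∞^{(p)} = A[p] Q[p:p]⁻¹ e_p`. -/
def Cinf {P k : ℕ} (Q : Matrix (Fin P) (Fin P) ℝ) (A : Matrix (Fin k) (Fin P) ℝ)
    (p : ℕ) : Fin k → ℝ :=
  take A p *ᵥ ((subSq Q p)⁻¹ *ᵥ lastBasis p)

/-- `A[p] Q[p:p]⁻¹ A[p]'`, the asymptotic covariance matrix (up to `σ²`) of `√n A θ̃(p)`. -/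
def SigInf {P k : ℕ} (Q : Matrix (Fin P) (Fin P) ℝ) (A : Matrix (Fin k) (Fin P) ℝ)
    (p : ℕ) : Matrix (Fin k) (Fin k) ℝ :=
  take A p * (subSq Q p)⁻¹ * (take A p)ᵀ

/-- `ξ_{∞,p}² = (Q[p:p]⁻¹)_{p,p}` (nonnegative square root). -/
def xiInf {P : ℕ} (Q : Matrix (Fin P) (Fin P) ℝ) (p : ℕ) : ℝ :=
  Real.sqrt (lastEntry ((subSq Q p)⁻¹))

/-- `ζ_{∞,p}² = ξ_{∞,p}² − C_∞^{(p)'} (A[p]Q[p:p]⁻¹A[p]')⁻ C_∞^{(p)}`. -/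
def zetaInf {P k : ℕ} (Q : Matrix (Fin P) (Fin P) ℝ) (A : Matrix (Fin k) (Fin P) ℝ)
    (p : ℕ) : ℝ :=
  Real.sqrt (xiInf Q p ^ 2 - Cinf Q A p ⬝ᵥ (ginv (SigInf Q A p) *ᵥ Cinf Q A p))

/-- `b_{∞,p} z = C_∞^{(p)'} (A[p]Q[p:p]⁻¹A[p]')⁻ z`. -/
def bInf {P k : ℕ} (Q : Matrix (Fin P) (Fin P) ℝ) (A : Matrix (Fin k) (Fin P) ℝ)
    (p : ℕ) (z : Fin k → ℝ) : ℝ :=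
  Cinf Q A p ⬝ᵥ (ginv (SigInf Q A p) *ᵥ z)

/-- The measure `Φ_{∞,p}`: Gaussian `N(0, σ² A[p]Q[p:p]⁻¹A[p]')` on `ℝ^k`
(point mass at `0` for `p = 0`). -/
def PhiInfMeas {P k : ℕ} (Q : Matrix (Fin P) (Fin P) ℝ) (A : Matrix (Fin k) (Fin P) ℝ)
    (σ : ℝ) (p : ℕ) : Measure (Fin k → ℝ) :=
  (stdGaussian k).map fun z => σ • (msqrt (SigInf Q A p) *ᵥ z)

/-- The cdf `Φ_{∞,p}(t)`. -/
def PhiInfCdf {P k : ℕ} (Q : Matrix (Fin P) (Fin P) ℝ) (A : Matrix (Fin k) (Fin P) ℝ)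
    (σ : ℝ) (p : ℕ) (t : Fin k → ℝ) : ℝ :=
  (PhiInfMeas Q A σ p { x | x ≤ t }).toReal

/-- The density `φ` of `N(0, M)` on `ℝ^k` (for nonsingular `M`). -/
def gaussPdf {k : ℕ} (M : Matrix (Fin k) (Fin k) ℝ) (x : Fin k → ℝ) : ℝ :=
  (Real.sqrt ((2 * π) ^ k * M.det))⁻¹ * Real.exp (-(x ⬝ᵥ (M⁻¹ *ᵥ x)) / 2)

/-- The bias vector `β^{(p)} = A (Q[p:p]⁻¹ Q[p:¬p] γ[¬p] ; −γ[¬p])`. -/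
def betaLim {P k : ℕ} (Q : Matrix (Fin P) (Fin P) ℝ) (A : Matrix (Fin k) (Fin P) ℝ)
    (γ : Fin P → ℝ) (p : ℕ) : Fin k → ℝ :=
  A *ᵥ fun i =>
    if h : (i : ℕ) < p then ((subSq Q p)⁻¹ *ᵥ (offBlock Q p *ᵥ vdrop γ p)) ⟨i, h⟩
    else -γ i

/-- `ν_p = γ_p + (Q[p:p]⁻¹ Q[p:¬p] γ[¬p])_p`. -/
def nuLim {P : ℕ} (Q : Matrix (Fin P) (Fin P) ℝ) (γ : Fin P → ℝ) (p : ℕ) : ℝ :=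
  comp γ (p - 1) + lastComp ((subSq Q p)⁻¹ *ᵥ (offBlock Q p *ᵥ vdrop γ p))

/-- The large-sample limit cdf `G_{∞,θ,σ,γ}(t)` of `G_{n,θ+γ/√n,σ}(t)`. -/
def Ginf {P k : ℕ} (Q : Matrix (Fin P) (Fin P) ℝ) (A : Matrix (Fin k) (Fin P) ℝ)
    (c : ℕ → ℝ) (O : ℕ) (θ : Fin P → ℝ) (σ : ℝ) (γ : Fin P → ℝ) (t : Fin k → ℝ) : ℝ :=
  let ps := max (p0 θ) O
  PhiInfCdf Q A σ ps (t - betaLim Q A γ ps) *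
      ∏ q ∈ Finset.Ioc ps P, Dg (σ * xiInf Q q) (nuLim Q γ q) (c q * σ * xiInf Q q) +
    ∑ p ∈ Finset.Ioc ps P,
      (∫ z in { x : Fin k → ℝ | x ≤ t - betaLim Q A γ p },
          (1 - Dg (σ * zetaInf Q A p) (nuLim Q γ p + bInf Q A p z)
              (c p * σ * xiInf Q p)) ∂(PhiInfMeas Q A σ p)) *
        ∏ q ∈ Finset.Ioc p P, Dg (σ * xiInf Q q) (nuLim Q γ q) (c q * σ * xiInf Q q)

/-- The large-sample limit distribution `G_{∞,θ,σ,γ}` as a measure on `ℝ^k`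
(its cdf is `Ginf`). -/
def GinfMeas {P k : ℕ} (Q : Matrix (Fin P) (Fin P) ℝ) (A : Matrix (Fin k) (Fin P) ℝ)
    (c : ℕ → ℝ) (O : ℕ) (θ : Fin P → ℝ) (σ : ℝ) (γ : Fin P → ℝ) :
    Measure (Fin k → ℝ) :=
  let ps := max (p0 θ) O
  (ENNReal.ofReal
        (∏ q ∈ Finset.Ioc ps P, Dg (σ * xiInf Q q) (nuLim Q γ q) (c q * σ * xiInf Q q))) •
      ((PhiInfMeas Q A σ ps).map fun z => z + betaLim Q A γ ps) +
    ∑ p ∈ Finset.Ioc ps P,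
      (ENNReal.ofReal
          (∏ q ∈ Finset.Ioc p P, Dg (σ * xiInf Q q) (nuLim Q γ q) (c q * σ * xiInf Q q))) •
        (((PhiInfMeas Q A σ p).withDensity fun z =>
              ENNReal.ofReal
                (1 - Dg (σ * zetaInf Q A p) (nuLim Q γ p + bInf Q A p z)
                    (c p * σ * xiInf Q p))).map
          fun z => z + betaLim Q A γ p)

/-!
For `p* < p ≤ P`, the vector `Q[p:p]⁻¹ w[p]` differs from `(Q[p-1:p-1]⁻¹ w[p-1], 0)` by a
multiple of `Q[p:p]⁻¹ e_p`, which `A[p]` maps to `C_∞^{(p)} = 0`. Hence `A[p] Q[p:p]⁻¹ w[p]` is the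
same for all `p* ≤ p ≤ P`. Applied to the rows of `A` this gives `Φ_{∞,p} = Φ_{∞,P}`, and applied
to `w = Qγ`, via `β^{(p)} = A[p] Q[p:p]⁻¹ (Qγ)[p] − Aγ`, it gives `β^{(p)} = β^{(P)} = 0`.
Moreover `ζ_{∞,p} = ξ_{∞,p}` and `b_{∞,p} = 0`, so each integral in `G_{∞,θ,σ,γ}(t)` factors as
`Φ_{∞,P}(t) (1 − Δ_p)`, and `∏_{q > p*} Δ_q + ∑_{p > p*} (1 − Δ_p) ∏_{q > p} Δ_q = 1`.
-/

end PMS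

theorem Fin.sum_univ_split_le {M : Type*} [AddCommMonoid M] {p P : ℕ} (h : p ≤ P)
    (f : Fin P → M) :
    ∑ a, f a = ∑ i : Fin p, f (Fin.castLE h i) + ∑ j : Fin (P - p), f ⟨p + j, by omega⟩ := by
  rw [← Fintype.sum_equiv (finCongr (Nat.add_sub_of_le h)) (fun a => f (finCongr _ a)) f
    (fun _ => rfl), Fin.sum_univ_add]
  rfl

theorem Finset.sum_Ioc_one_sub_mul_prod_Ioc {R : Type*} [CommRing R] (d : ℕ → R) (a b : ℕ) :
    ∑ p ∈ Finset.Ioc a b, (1 - d p) * ∏ q ∈ Finset.Ioc p b, d q =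
      1 - ∏ q ∈ Finset.Ioc a b, d q := by
  induction b with
  | zero => simp
  | succ b ih =>
    rcases le_or_gt a b with hab | hba
    · rw [sum_Ioc_succ_top (by omega), prod_Ioc_succ_top hab,
        sum_congr rfl fun p hp => by rw [prod_Ioc_succ_top (mem_Ioc.1 hp).2, ← mul_assoc],
        ← sum_mul, ih, Ioc_self, prod_empty]
      ring
    · simp [Ioc_eq_empty_of_le (show b + 1 ≤ a by omega)]

theorem Matrix.mulVec_snoc_zero {R m : Type*} [NonUnitalNonAssocSemiring R] {p : ℕ}
    (B : Matrix m (Fin (p + 1)) R) (y : Fin p → R) :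
    B *ᵥ Fin.snoc y 0 = B.submatrix id Fin.castSucc *ᵥ y := by
  ext i
  simp [mulVec, dotProduct, Fin.sum_univ_castSucc]

theorem Matrix.exists_inv_mulVec_eq_snoc_add_smul {R : Type*} [CommRing R] {p : ℕ}
    (M : Matrix (Fin (p + 1)) (Fin (p + 1)) R) (hM : IsUnit M.det)
    (hN : IsUnit (M.submatrix Fin.castSucc Fin.castSucc).det) (u : Fin (p + 1) → R) :
    ∃ c : R, M⁻¹ *ᵥ u = Fin.snoc ((M.submatrix Fin.castSucc Fin.castSucc)⁻¹ *ᵥ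
      (u ∘ Fin.castSucc)) 0 + c • (M⁻¹ *ᵥ Pi.single (Fin.last p) 1) := by
  set x : Fin (p + 1) → R := Fin.snoc ((M.submatrix Fin.castSucc Fin.castSucc)⁻¹ *ᵥ
      (u ∘ Fin.castSucc)) 0
  set r := u - M *ᵥ x
  have hr : r = r (Fin.last p) • Pi.single (Fin.last p) 1 := by
    ext i
    refine Fin.lastCases (by simp) (fun i => ?_) i
    have : (M *ᵥ x) i.castSucc = u i.castSucc := by
      rw [show (M *ᵥ x) i.castSucc = (M.submatrix Fin.castSucc id *ᵥ x) i from rfl,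
        mulVec_snoc_zero, submatrix_submatrix, Function.comp_id, Function.id_comp, mulVec_mulVec,
        mul_nonsing_inv _ hN, one_mulVec]
      rfl
    simp [r, this]
  refine ⟨r (Fin.last p), ?_⟩
  rw [← mulVec_smul, ← hr, mulVec_sub, mulVec_mulVec, nonsing_inv_mul _ hM, one_mulVec]
  abel

namespace PMS

section

variable {P k : ℕ}

theorem p0_le (θ : Fin P → ℝ) : p0 θ ≤ P :=
  Nat.sInf_le fun i hi => absurd i.2 (not_lt.2 hi)

theorem lastBasis_succ (p : ℕ) : lastBasis (p + 1) = Pi.single (Fin.last p) 1 := by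
  ext i
  simp [lastBasis, Pi.single_apply, Fin.ext_iff]

theorem isUnit_det_subSq {Q : Matrix (Fin P) (Fin P) ℝ} (hQ : Q.PosDef) {p : ℕ} (h : p ≤ P) :
    IsUnit (subSq Q p).det := by
  have hsub : subSq Q p = Q.submatrix (Fin.castLE h) (Fin.castLE h) := by
    ext i j
    simp only [subSq, submatrix_apply, i.2.trans_le h, j.2.trans_le h, ↓reduceDIte]
    rfl
  rw [← isUnit_iff_isUnit_det, hsub]
  exact (hQ.submatrix (Fin.castLE_injective h)).isUnit

theorem mulVec_padZero {m : Type*} (A : Matrix m (Fin P) ℝ) {p : ℕ} (h : p ≤ P)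
    (v : Fin p → ℝ) : A *ᵥ (padZero v : Fin P → ℝ) = take A p *ᵥ v := by
  ext i
  simp only [mulVec, dotProduct]
  rw [Fin.sum_univ_split_le h, add_eq_left.2 (Finset.sum_eq_zero fun j _ => by simp [padZero])]
  refine Finset.sum_congr rfl fun j _ => ?_
  simp only [padZero, take, Fin.val_castLE, dif_pos j.2, dif_pos (j.2.trans_le h)]
  rfl

theorem comp_mulVec_eq_subSq_add_offBlock (Q : Matrix (Fin P) (Fin P) ℝ) (γ : Fin P → ℝ)
    {p : ℕ} (h : p ≤ P) :
    (fun i : Fin p => comp (Q *ᵥ γ) i) =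
      subSq Q p *ᵥ (fun i => comp γ i) + offBlock Q p *ᵥ vdrop γ p := by
  ext i
  have hi : (i : ℕ) < P := i.2.trans_le h
  simp only [comp, dif_pos hi, Pi.add_apply, mulVec, dotProduct]
  rw [Fin.sum_univ_split_le h]
  congr 1 <;> refine Finset.sum_congr rfl fun j _ => ?_
  · simp only [subSq, hi, j.2.trans_le h, ↓reduceDIte]
    rfl
  · simp [offBlock, vdrop, hi, (by omega : p + (j : ℕ) < P)]

/-- `A[p] Q[p:p]⁻¹ w[p]`. -/
def blockSolve (Q : Matrix (Fin P) (Fin P) ℝ) (A : Matrix (Fin k) (Fin P) ℝ) (p : ℕ)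
    (w : Fin P → ℝ) : Fin k → ℝ :=
  take A p *ᵥ ((subSq Q p)⁻¹ *ᵥ fun i : Fin p => comp w i)

theorem blockSolve_succ {Q : Matrix (Fin P) (Fin P) ℝ} {A : Matrix (Fin k) (Fin P) ℝ}
    (hQ : Q.PosDef) {p : ℕ} (h : p + 1 ≤ P) (hC : Cinf Q A (p + 1) = 0) (w : Fin P → ℝ) :
    blockSolve Q A (p + 1) w = blockSolve Q A p w := by
  obtain ⟨c, hc⟩ := exists_inv_mulVec_eq_snoc_add_smul (subSq Q (p + 1))
    (isUnit_det_subSq hQ h) (isUnit_det_subSq hQ (by omega : p ≤ P)) fun i => comp w i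
  rw [blockSolve, hc, mulVec_add, mulVec_smul, ← lastBasis_succ,
    show take A (p + 1) *ᵥ ((subSq Q (p + 1))⁻¹ *ᵥ lastBasis (p + 1)) = 0 from hC,
    smul_zero, add_zero, mulVec_snoc_zero]
  rfl

theorem blockSolve_eq_blockSolve_top {Q : Matrix (Fin P) (Fin P) ℝ}
    {A : Matrix (Fin k) (Fin P) ℝ} (hQ : Q.PosDef) {a : ℕ}
    (hC : ∀ p, a < p → p ≤ P → Cinf Q A p = 0) (w : Fin P → ℝ) {p : ℕ} (hap : a ≤ p)
    (hp : p ≤ P) : blockSolve Q A p w = blockSolve Q A P w := by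
  induction hp using Nat.decreasingInduction with
  | self => rfl
  | of_succ q hq ih => rw [← ih (by omega), blockSolve_succ hQ hq (hC _ (by omega) hq)]

theorem SigInf_apply (Q : Matrix (Fin P) (Fin P) ℝ) (A : Matrix (Fin k) (Fin P) ℝ) (p : ℕ)
    (i j : Fin k) : SigInf Q A p i j = blockSolve Q A p (A j) i := by
  rw [SigInf, blockSolve, mulVec_mulVec]
  rfl

theorem SigInf_eq_SigInf_top {Q : Matrix (Fin P) (Fin P) ℝ}
    {A : Matrix (Fin k) (Fin P) ℝ} (hQ : Q.PosDef) {a : ℕ}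
    (hC : ∀ p, a < p → p ≤ P → Cinf Q A p = 0) {p : ℕ} (hap : a ≤ p) (hp : p ≤ P) :
    SigInf Q A p = SigInf Q A P := by
  ext i j
  simp only [SigInf_apply, blockSolve_eq_blockSolve_top hQ hC _ hap hp]

theorem PhiInfCdf_congr {Q : Matrix (Fin P) (Fin P) ℝ} {A : Matrix (Fin k) (Fin P) ℝ} (σ : ℝ)
    {p q : ℕ} (h : SigInf Q A p = SigInf Q A q) : PhiInfCdf Q A σ p = PhiInfCdf Q A σ q := by
  ext t
  rw [PhiInfCdf, PhiInfMeas, h]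
  rfl

theorem betaLim_eq_blockSolve_sub {Q : Matrix (Fin P) (Fin P) ℝ} (hQ : Q.PosDef)
    (A : Matrix (Fin k) (Fin P) ℝ) (γ : Fin P → ℝ) {p : ℕ} (h : p ≤ P) :
    betaLim Q A γ p = blockSolve Q A p (Q *ᵥ γ) - A *ᵥ γ := by
  rw [blockSolve, ← mulVec_padZero A h, ← mulVec_sub, betaLim,
    comp_mulVec_eq_subSq_add_offBlock Q γ h, mulVec_add, mulVec_mulVec _ (subSq Q p)⁻¹ (subSq Q p),
    nonsing_inv_mul _ (isUnit_det_subSq hQ h), one_mulVec]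
  congr 1
  ext i
  by_cases hi : (i : ℕ) < p
  · simp [padZero, hi, comp]
  · simp [padZero, hi]

theorem betaLim_top (Q : Matrix (Fin P) (Fin P) ℝ) (A : Matrix (Fin k) (Fin P) ℝ)
    (γ : Fin P → ℝ) : betaLim Q A γ P = 0 := by
  have hvdrop : vdrop γ P = 0 := by
    ext j
    exact absurd j.2 (by omega)
  simp only [betaLim, hvdrop, mulVec_zero, Pi.zero_apply, dif_pos (Fin.is_lt _)]
  exact mulVec_zero A

theorem betaLim_eq_zero {Q : Matrix (Fin P) (Fin P) ℝ}
    {A : Matrix (Fin k) (Fin P) ℝ} (hQ : Q.PosDef) {a : ℕ}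
    (hC : ∀ p, a < p → p ≤ P → Cinf Q A p = 0) (γ : Fin P → ℝ) {p : ℕ} (hap : a ≤ p)
    (hp : p ≤ P) : betaLim Q A γ p = 0 := by
  rw [betaLim_eq_blockSolve_sub hQ A γ hp, blockSolve_eq_blockSolve_top hQ hC _ hap hp,
    ← betaLim_eq_blockSolve_sub hQ A γ le_rfl, betaLim_top]

theorem zetaInf_of_Cinf_eq_zero {Q : Matrix (Fin P) (Fin P) ℝ}
    {A : Matrix (Fin k) (Fin P) ℝ} {p : ℕ} (hC : Cinf Q A p = 0) :
    zetaInf Q A p = xiInf Q p := by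
  rw [zetaInf, hC, zero_dotProduct, sub_zero, Real.sqrt_sq]
  exact Real.sqrt_nonneg _

theorem bInf_of_Cinf_eq_zero {Q : Matrix (Fin P) (Fin P) ℝ}
    {A : Matrix (Fin k) (Fin P) ℝ} {p : ℕ} (hC : Cinf Q A p = 0) : bInf Q A p = 0 := by
  ext z
  rw [bInf, hC, zero_dotProduct, Pi.zero_apply]

theorem setIntegral_one_sub_Dg_of_Cinf_eq_zero {Q : Matrix (Fin P) (Fin P) ℝ}
    {A : Matrix (Fin k) (Fin P) ℝ} {p : ℕ} (hC : Cinf Q A p = 0) (σ ν r : ℝ) (t : Fin k → ℝ) :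
    ∫ z in {x | x ≤ t}, 1 - Dg (σ * zetaInf Q A p) (ν + bInf Q A p z) r ∂PhiInfMeas Q A σ p =
      PhiInfCdf Q A σ p t * (1 - Dg (σ * xiInf Q p) ν r) := by
  simp only [zetaInf_of_Cinf_eq_zero hC, bInf_of_Cinf_eq_zero hC, Pi.zero_apply, add_zero,
    setIntegral_const, smul_eq_mul]
  rfl

end

theorem limit_cdf_reduces_to_gaussian_general
    {P k O : ℕ} (hO : O < P)
    (Q : Matrix (Fin P) (Fin P) ℝ) (A : Matrix (Fin k) (Fin P) ℝ) (c : ℕ → ℝ)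
    (hQ : Q.PosDef)
    (θ γ : Fin P → ℝ) (σ : ℝ)
    (huncorr : ∀ p, max (p0 θ) O < p → p ≤ P → Cinf Q A p = 0) :
    ∀ t : Fin k → ℝ, Ginf Q A c O θ σ γ t = PhiInfCdf Q A σ P t := by
  intro t
  set ps := max (p0 θ) O
  have hps : ps ≤ P := max_le (p0_le θ) hO.le
  have hβ (p) (hp : ps ≤ p) (hpP : p ≤ P) : betaLim Q A γ p = 0 :=
    betaLim_eq_zero hQ huncorr γ hp hpP
  have hΦ (p) (hp : ps ≤ p) (hpP : p ≤ P) : PhiInfCdf Q A σ p = PhiInfCdf Q A σ P :=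
    PhiInfCdf_congr σ (SigInf_eq_SigInf_top hQ huncorr hp hpP)
  simp only [Ginf]
  rw [Finset.sum_congr rfl fun p hp => by
      obtain ⟨hpsp, hpP⟩ := Finset.mem_Ioc.1 hp
      rw [setIntegral_one_sub_Dg_of_Cinf_eq_zero (huncorr p hpsp hpP), hβ p hpsp.le hpP,
        hΦ p hpsp.le hpP, sub_zero, mul_assoc],
    ← Finset.mul_sum, Finset.sum_Ioc_one_sub_mul_prod_Ioc, hβ ps le_rfl hps, hΦ ps le_rfl hps,
    sub_zero]
  ring

/-- **Statement 19** (Remark B.3 / rb.3): if `C_∞^{(p)} = 0` for all `p` with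
`p* < p ≤ P`, then the limit cdf `G_{∞,θ,σ,γ}` coincides with `Φ_{∞,P}`, the cdf of
`N(0, σ² A Q⁻¹ A')`; in particular it does not depend on `γ`. -/
theorem limit_cdf_reduces_to_gaussian
    {P k O : ℕ} (hP : 1 ≤ P) (hk : 1 ≤ k) (hkP : k ≤ P) (hO : O < P)
    (Q : Matrix (Fin P) (Fin P) ℝ) (A : Matrix (Fin k) (Fin P) ℝ) (c : ℕ → ℝ)
    (hQ : Q.PosDef) (hArank : A.rank = k)
    (hc : ∀ p, O < p → p ≤ P → 0 < c p)
    (θ γ : Fin P → ℝ) (σ : ℝ) (hσ : 0 < σ)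
    (huncorr : ∀ p, max (p0 θ) O < p → p ≤ P → Cinf Q A p = 0) :
    ∀ t : Fin k → ℝ, Ginf Q A c O θ σ γ t = PhiInfCdf Q A σ P t :=
  limit_cdf_reduces_to_gaussian_general hO Q A c hQ θ γ σ huncorr

end PMS
end
end
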